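/- arXiv:1506.04692 — 5 statements merged into one kernel-verified Lean document; each statement's English description precedes it below -/
import Mathlib

section
/- Let f, g be two nonnegative elements of L²(μ) with ‖f‖ = 1 and ‖g‖ > 0, and let ḡ = g/‖g‖. Then ‖f − ḡ‖² ≤ 4‖f − g‖² / (4 − ‖f − ḡ‖²) ≤ 2‖f − g‖². -/
open MeasureTheory

lemma expand_sq {α : Type*} [MeasurableSpace α] (μ : Measure α) (f g : α → ℝ)
    (hf2 : Integrable (fun x => (f x) ^ 2) μ)
    (hg2 : Integrable (fun x => (g x) ^ 2) μ)
    (hfg : Integrable (fun x => f x * g x) μ) :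
    ∫ x, (f x - g x) ^ 2 ∂μ
      = (∫ x, (f x) ^ 2 ∂μ) - 2 * (∫ x, f x * g x ∂μ) + ∫ x, (g x) ^ 2 ∂μ := by
  have h : ∀ x, (f x - g x) ^ 2 = ((f x) ^ 2 - 2 * (f x * g x)) + (g x) ^ 2 := by
    intro x; ring
  simp_rw [h]
  have h1 : Integrable (fun x => (f x) ^ 2 - 2 * (f x * g x)) μ := hf2.sub (hfg.const_mul 2)
  have h2 : Integrable (fun x => 2 * (f x * g x)) μ := hfg.const_mul 2
  rw [integral_add h1 hg2, integral_sub hf2 h2, integral_const_mul]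

theorem stmt0 {α : Type*} [MeasurableSpace α] (μ : Measure α) (f g : α → ℝ)
    (hf0 : ∀ x, 0 ≤ f x) (hg0 : ∀ x, 0 ≤ g x)
    (hf2 : Integrable (fun x => (f x) ^ 2) μ)
    (hg2 : Integrable (fun x => (g x) ^ 2) μ)
    (hfnorm : ∫ x, (f x) ^ 2 ∂μ = 1)
    (hgnorm : 0 < Real.sqrt (∫ x, (g x) ^ 2 ∂μ)) :
    let Ng := Real.sqrt (∫ x, (g x) ^ 2 ∂μ)
    let gbar := fun x => g x / Ng
    (∫ x, (f x - gbar x) ^ 2 ∂μ)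
        ≤ 4 * (∫ x, (f x - g x) ^ 2 ∂μ) / (4 - ∫ x, (f x - gbar x) ^ 2 ∂μ) ∧
    4 * (∫ x, (f x - g x) ^ 2 ∂μ) / (4 - ∫ x, (f x - gbar x) ^ 2 ∂μ)
        ≤ 2 * ∫ x, (f x - g x) ^ 2 ∂μ := by
  intro Ng gbar
  have hg2nn : 0 ≤ ∫ x, (g x) ^ 2 ∂μ := integral_nonneg fun x => sq_nonneg _
  have hN : 0 < Ng := hgnorm
  have hN2 : Ng ^ 2 = ∫ x, (g x) ^ 2 ∂μ := Real.sq_sqrt hg2nn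
  -- measurability of f and g
  have hmf : AEStronglyMeasurable f μ := by
    have := hf2.aestronglyMeasurable
    have h2 : (fun x => Real.sqrt ((f x) ^ 2)) = f := by
      funext x; exact Real.sqrt_sq (hf0 x)
    simpa [h2] using Real.continuous_sqrt.comp_aestronglyMeasurable this
  have hmg : AEStronglyMeasurable g μ := by
    have := hg2.aestronglyMeasurable
    have h2 : (fun x => Real.sqrt ((g x) ^ 2)) = g := by
      funext x; exact Real.sqrt_sq (hg0 x)
    simpa [h2] using Real.continuous_sqrt.comp_aestronglyMeasurable this
  have hfg : Integrable (fun x => f x * g x) μ := by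
    refine Integrable.mono' (g := fun x => (f x) ^ 2 + (g x) ^ 2) (hf2.add hg2) (hmf.mul hmg) ?_
    filter_upwards with x
    have := sq_nonneg (f x - g x)
    have h1 : 0 ≤ f x * g x := mul_nonneg (hf0 x) (hg0 x)
    rw [Real.norm_eq_abs, abs_of_nonneg h1]
    nlinarith
  set I := ∫ x, f x * g x ∂μ with hIdef
  have hI0 : 0 ≤ I := integral_nonneg fun x => mul_nonneg (hf0 x) (hg0 x)
  -- expansion for (f - g)^2
  have hE : ∫ x, (f x - g x) ^ 2 ∂μ = 1 - 2 * I + Ng ^ 2 := by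
    rw [expand_sq μ f g hf2 hg2 hfg, hfnorm, hN2]
  -- expansion for (f - gbar)^2
  have hgbar2 : Integrable (fun x => (gbar x) ^ 2) μ := by
    have : (fun x => (gbar x) ^ 2) = fun x => (g x) ^ 2 / Ng ^ 2 := by
      funext x; simp [gbar, div_pow]
    rw [this]; exact hg2.div_const _
  have hfgbar : Integrable (fun x => f x * gbar x) μ := by
    have : (fun x => f x * gbar x) = fun x => (f x * g x) / Ng := by
      funext x; simp [gbar, mul_div_assoc]
    rw [this]; exact hfg.div_const _
  have hD : ∫ x, (f x - gbar x) ^ 2 ∂μ = 2 - 2 * (I / Ng) := by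
    rw [expand_sq μ f gbar hf2 hgbar2 hfgbar, hfnorm]
    have h1 : ∫ x, f x * gbar x ∂μ = I / Ng := by
      simp_rw [gbar, ← mul_div_assoc]
      rw [integral_div]
    have h2 : ∫ x, (gbar x) ^ 2 ∂μ = 1 := by
      simp_rw [gbar, div_pow]
      rw [integral_div, ← hN2, div_self (by positivity)]
    rw [h1, h2]; ring
  set s := I / Ng with hsdef
  have hs0 : 0 ≤ s := div_nonneg hI0 hN.le
  have hIs : I = s * Ng := (div_mul_cancel₀ I hN.ne').symm
  have hE0 : 0 ≤ ∫ x, (f x - g x) ^ 2 ∂μ := integral_nonneg fun x => sq_nonneg _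
  rw [hD, hE]
  have hden : (0:ℝ) < 4 - (2 - 2 * s) := by linarith
  constructor
  · rw [le_div_iff₀ hden]
    nlinarith [sq_nonneg (Ng - s)]
  · rw [div_le_iff₀ hden]
    nlinarith [hE0, hE]
end

section
/- Let (Ω, P) be a probability space, M a countable index set with weights Δ_m ≥ 0 satisfying Γ = ∑_{m∈M} exp(−Δ_m) < ∞. Suppose for a fixed m and each l ∈ M with l ≠ m there is an event E_l with P(E_l) ≤ exp(−2A·d(l)² − (Δ_l − Δ_m)) where d(l) ≥ 0 and A > 0. Define D = sup_{l≠m} d(l)·1_{E_l}. Then for all y such that A y² ≥ Δ_m, P(D ≥ y) ≤ Γ·exp(−2Ay² + Δ_m). -/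
open MeasureTheory

theorem stmt6 {Ω ι : Type*} [MeasurableSpace Ω] [Countable ι]
    (P : Measure Ω) [IsProbabilityMeasure P]
    (Δ : ι → ℝ) (hΔ0 : ∀ l, 0 ≤ Δ l) (hsum : Summable fun l => Real.exp (-Δ l))
    (A : ℝ) (hA : 0 < A) (m : ι) (d : ι → ℝ) (hd : ∀ l, 0 ≤ d l)
    (E : ι → Set Ω) (hE : ∀ l, MeasurableSet (E l))
    (hbound : ∀ l, l ≠ m →
      P (E l) ≤ ENNReal.ofReal (Real.exp (-2 * A * (d l) ^ 2 - (Δ l - Δ m))))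
    (y : ℝ) (hy : 0 ≤ y) (hyA : Δ m ≤ A * y ^ 2) :
    P {ω | y ≤ ⨆ l : {l : ι // l ≠ m}, (E l.1).indicator (fun _ => d l.1) ω}
      ≤ ENNReal.ofReal ((∑' l, Real.exp (-Δ l)) * Real.exp (-2 * A * y ^ 2 + Δ m)) := by
  set Γ := ∑' l, Real.exp (-Δ l) with hΓ
  have hΓnn : 0 ≤ Γ := tsum_nonneg fun l => (Real.exp_pos _).le
  have hΓm : Real.exp (-Δ m) ≤ Γ := Summable.le_tsum hsum m fun l _ => (Real.exp_pos _).le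
  rcases eq_or_lt_of_le hy with hy0 | hy0
  · -- y = 0 : RHS ≥ 1
    have h1 : (1 : ℝ) ≤ Γ * Real.exp (-2 * A * y ^ 2 + Δ m) := by
      calc (1 : ℝ) = Real.exp (-Δ m) * Real.exp (Δ m) := by
            rw [← Real.exp_add]; simp
        _ ≤ Γ * Real.exp (-2 * A * y ^ 2 + Δ m) := by
            rw [← hy0]
            apply mul_le_mul hΓm (by norm_num) (Real.exp_pos _).le hΓnn
    calc P _ ≤ 1 := prob_le_one
      _ = ENNReal.ofReal 1 := by simp
      _ ≤ _ := ENNReal.ofReal_le_ofReal h1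
  · -- y > 0
    have key : ∀ z : ℝ, 0 ≤ z → z < y →
        P {ω | y ≤ ⨆ l : {l : ι // l ≠ m}, (E l.1).indicator (fun _ => d l.1) ω}
          ≤ ENNReal.ofReal (Γ * Real.exp (-2 * A * z ^ 2 + Δ m)) := by
      intro z hz0 hzy
      set T : {l : ι // l ≠ m} → Set Ω := fun l => if z < d l.1 then E l.1 else ∅ with hT
      have hsub : {ω | y ≤ ⨆ l : {l : ι // l ≠ m}, (E l.1).indicator (fun _ => d l.1) ω}
          ⊆ ⋃ l, T l := by
        intro ω hω
        simp only [Set.mem_setOf_eq] at hω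
        by_cases hne : Nonempty {l : ι // l ≠ m}
        · have hlt : z < ⨆ l : {l : ι // l ≠ m}, (E l.1).indicator (fun _ => d l.1) ω :=
            lt_of_lt_of_le hzy hω
          obtain ⟨l, hl⟩ := exists_lt_of_lt_ciSup hlt
          have hωE : ω ∈ E l.1 := by
            by_contra hc
            rw [Set.indicator_of_notMem hc] at hl
            exact absurd hl (not_lt.2 hz0)
          rw [Set.indicator_of_mem hωE] at hl
          exact Set.mem_iUnion.2 ⟨l, by simp [hT, hl, hωE]⟩
        · rw [not_nonempty_iff] at hne
          rw [Real.iSup_of_isEmpty] at hω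
          exact absurd (lt_of_lt_of_le hzy hω) (not_lt.2 hz0)
      have hterm : ∀ l : {l : ι // l ≠ m},
          P (T l) ≤ ENNReal.ofReal (Real.exp (-Δ l.1) * Real.exp (-2 * A * z ^ 2 + Δ m)) := by
        intro l
        by_cases hc : z < d l.1
        · have : T l = E l.1 := if_pos hc
          rw [this]
          refine (hbound l.1 l.2).trans (ENNReal.ofReal_le_ofReal ?_)
          rw [← Real.exp_add]
          apply Real.exp_le_exp.2
          have hsq : z ^ 2 ≤ d l.1 ^ 2 := by nlinarith
          nlinarith
        · have : T l = ∅ := if_neg hc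
          rw [this]
          simp
      calc P _ ≤ P (⋃ l, T l) := measure_mono hsub
        _ ≤ ∑' l : {l : ι // l ≠ m}, P (T l) := measure_iUnion_le _
        _ ≤ ∑' l : {l : ι // l ≠ m},
            ENNReal.ofReal (Real.exp (-Δ l.1) * Real.exp (-2 * A * z ^ 2 + Δ m)) :=
          ENNReal.tsum_le_tsum hterm
        _ ≤ ∑' l : ι,
            ENNReal.ofReal (Real.exp (-Δ l) * Real.exp (-2 * A * z ^ 2 + Δ m)) :=
          ENNReal.tsum_comp_le_tsum_of_injective Subtype.val_injective _
        _ = ENNReal.ofReal (∑' l : ι,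
            Real.exp (-Δ l) * Real.exp (-2 * A * z ^ 2 + Δ m)) := by
          rw [ENNReal.ofReal_tsum_of_nonneg
            (fun l => mul_nonneg (Real.exp_pos _).le (Real.exp_pos _).le)
            (hsum.mul_right _)]
        _ = ENNReal.ofReal (Γ * Real.exp (-2 * A * z ^ 2 + Δ m)) := by
          rw [tsum_mul_right]
    -- take the limit z → y⁻
    have htend : Filter.Tendsto
        (fun z => ENNReal.ofReal (Γ * Real.exp (-2 * A * z ^ 2 + Δ m)))
        (nhdsWithin y (Set.Iio y))
        (nhds (ENNReal.ofReal (Γ * Real.exp (-2 * A * y ^ 2 + Δ m)))) := by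
      have hcont : Continuous fun z : ℝ =>
          ENNReal.ofReal (Γ * Real.exp (-2 * A * z ^ 2 + Δ m)) := by
        apply ENNReal.continuous_ofReal.comp
        exact continuous_const.mul (Real.continuous_exp.comp (by continuity))
      exact (hcont.tendsto y).mono_left nhdsWithin_le_nhds
    refine ge_of_tendsto htend ?_
    filter_upwards [Ioo_mem_nhdsLT hy0] with z hz
    exact key z hz.1.le hz.2
end

section
/- Let s, K be probability densities on ℝ with respect to Lebesgue measure, g = √s, and suppose ω₂(g,η) ≤ φ(η) for all η ≥ 0, where ω₂(g,η) = sup_{|z|≤η} ‖g(·+z) − g‖_{L²} and φ is nondecreasing and concave on [0,∞) with φ(0)=0. Then for every w > 0, ‖√s − √(K_w ∗ s)‖² ≤ 2·[∫_ℝ max(1,x²)K(x)dx]·φ(w)², where K_w(y) = w⁻¹K(y/w). -/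
open MeasureTheory
open Real ENNReal


lemma ae_comp_affine0 {f g : ℝ → ℝ} (h : f =ᵐ[volume] g) (a b : ℝ) (ha : a ≠ 0) :
    (fun y => f (a * y + b)) =ᵐ[volume] (fun y => g (a * y + b)) := by
  have h1 : Measure.QuasiMeasurePreserving (fun y : ℝ => a * y) volume volume :=
    ⟨measurable_id.const_mul a, by
      rw [Real.map_volume_mul_left ha]; exact Measure.smul_absolutelyContinuous⟩
  have h2 : Measure.QuasiMeasurePreserving (fun y : ℝ => y + b) volume volume :=
    (measurePreserving_add_right volume b).quasiMeasurePreserving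
  exact (h2.comp h1).ae_eq_comp h

lemma integral_comp_sub0 (F : ℝ → ℝ) (a : ℝ) : ∫ y, F (a - y) = ∫ y, F y := by
  calc ∫ y, F (a - y) = ∫ y, F (a + y) := by
        rw [← integral_neg_eq_self (fun y => F (a + y)) volume]
        simp only [sub_eq_add_neg]
    _ = ∫ y, F y := integral_add_left_eq_self F a


lemma key0 (s K : ℝ → ℝ) (hms : Measurable s) (hmK : Measurable K)
    (hs0 : ∀ x, 0 ≤ s x) (hs1 : ∫ x, s x = 1)
    (hK0 : ∀ x, 0 ≤ K x) (hK1 : ∫ x, K x = 1)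
    (hK2 : Integrable (fun x => x ^ 2 * K x))
    (φ : ℝ → ℝ) (hmono : MonotoneOn φ (Set.Ici 0))
    (hconc : ConcaveOn ℝ (Set.Ici 0) φ) (hφ0 : φ 0 = 0)
    (hmod : ∀ z : ℝ, (∫ x, (Real.sqrt (s (x + z)) - Real.sqrt (s x)) ^ 2) ≤ (φ |z|) ^ 2)
    (w : ℝ) (hw : 0 < w) :
    (∫ x, (Real.sqrt (s x) - Real.sqrt (∫ u, K u * s (x - w * u))) ^ 2)
      ≤ 2 * (∫ x, max 1 (x ^ 2) * K x) * (φ w) ^ 2 := by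
  -- basic facts
  have hsi : Integrable s := by
    by_contra h; rw [integral_undef h] at hs1; norm_num at hs1
  have hKi : Integrable K := by
    by_contra h; rw [integral_undef h] at hK1; norm_num at hK1
  set g : ℝ → ℝ := fun x => Real.sqrt (s x) with hg
  have hmg : Measurable g := Real.continuous_sqrt.measurable.comp hms
  have hgsq : ∀ x, g x ^ 2 = s x := fun x => Real.sq_sqrt (hs0 x)
  have hgnn : ∀ x, 0 ≤ g x := fun x => Real.sqrt_nonneg _
  set T : ℝ → ℝ := fun x => ∫ u, K u * s (x - w * u) with hTdef
  set L : ℝ → ℝ≥0∞ := fun x => ∫⁻ u, ENNReal.ofReal (K u * s (x - w * u)) with hLdef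
  have hmprod : Measurable (fun p : ℝ × ℝ => K p.2 * s (p.1 - w * p.2)) :=
    (hmK.comp measurable_snd).mul
      (hms.comp (measurable_fst.sub (measurable_snd.const_mul w)))
  have hmL : Measurable L :=
    (ENNReal.measurable_ofReal.comp hmprod).lintegral_prod_right'
  have hmix : ∀ x, Measurable (fun u => K u * s (x - w * u)) := fun x =>
    hmK.mul (hms.comp ((measurable_id.const_mul w).const_sub x))
  have hTL : ∀ x, T x = (L x).toReal := fun x =>
    integral_eq_lintegral_of_nonneg_ae
      (Filter.Eventually.of_forall fun u => mul_nonneg (hK0 u) (hs0 _))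
      (hmix x).aestronglyMeasurable
  have hmT : Measurable T := by
    have : T = fun x => (L x).toReal := funext hTL
    rw [this]; exact hmL.ennreal_toReal
  -- L integrates to 1
  have hsint : ∫⁻ x, ENNReal.ofReal (s x) = 1 := by
    rw [← ofReal_integral_eq_lintegral_ofReal hsi (Filter.Eventually.of_forall hs0), hs1,
      ENNReal.ofReal_one]
  have hKint : ∫⁻ x, ENNReal.ofReal (K x) = 1 := by
    rw [← ofReal_integral_eq_lintegral_ofReal hKi (Filter.Eventually.of_forall hK0), hK1,
      ENNReal.ofReal_one]
  have hLone : ∫⁻ x, L x = 1 := by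
    have hswap : ∫⁻ x, L x = ∫⁻ u, ∫⁻ x, ENNReal.ofReal (K u * s (x - w * u)) := by
      exact lintegral_lintegral_swap (ENNReal.measurable_ofReal.comp hmprod).aemeasurable
    rw [hswap]
    have hin : ∀ u : ℝ, ∫⁻ x, ENNReal.ofReal (K u * s (x - w * u)) = ENNReal.ofReal (K u) := by
      intro u
      simp_rw [ENNReal.ofReal_mul (hK0 u)]
      have hmeas : Measurable fun x : ℝ => ENNReal.ofReal (s (x - w * u)) :=
        ENNReal.measurable_ofReal.comp (hms.comp (measurable_id.sub_const (w * u)))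
      rw [lintegral_const_mul _ hmeas,
        lintegral_sub_right_eq_self (fun x => ENNReal.ofReal (s x)) (w * u), hsint, mul_one]
    simp_rw [hin]
    exact hKint
  have hae : ∀ᵐ x, L x < ⊤ := ae_lt_top hmL (by rw [hLone]; exact ENNReal.one_ne_top)
  -- φ facts
  have hφnn : ∀ t : ℝ, 0 ≤ t → 0 ≤ φ t := fun t ht => by
    rw [← hφ0]; exact hmono (Set.mem_Ici.mpr le_rfl) (Set.mem_Ici.mpr ht) ht
  have hφscale : ∀ u : ℝ, φ (w * |u|) ^ 2 ≤ max 1 (u ^ 2) * φ w ^ 2 := by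
    intro u
    have hwu : (0:ℝ) ≤ w * |u| := mul_nonneg hw.le (abs_nonneg u)
    have h0 : 0 ≤ φ (w * |u|) := hφnn _ hwu
    have hφw : 0 ≤ φ w := hφnn _ hw.le
    rcases le_or_gt |u| 1 with h | h
    · have h1 : φ (w * |u|) ≤ φ w := hmono (Set.mem_Ici.mpr hwu) (Set.mem_Ici.mpr hw.le)
        (by nlinarith [abs_nonneg u])
      have h2 := pow_le_pow_left₀ h0 h1 2
      have hmax : (1:ℝ) ≤ max 1 (u ^ 2) := le_max_left _ _
      nlinarith [sq_nonneg (φ w)]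
    · have hu0 : (0:ℝ) < |u| := lt_trans one_pos h
      have hinv : (0:ℝ) ≤ |u|⁻¹ := by positivity
      have hinv1 : |u|⁻¹ ≤ 1 := by
        rw [inv_le_one_iff₀]; right; exact h.le
      have hcc := hconc.2 (Set.mem_Ici.mpr (le_refl (0:ℝ))) (Set.mem_Ici.mpr hwu)
        (by linarith : (0:ℝ) ≤ 1 - |u|⁻¹) hinv (by ring)
      simp only [smul_eq_mul, hφ0, mul_zero, zero_add] at hcc
      have heq : |u|⁻¹ * (w * |u|) = w := by field_simp
      rw [heq] at hcc
      have h2 : φ (w * |u|) ≤ |u| * φ w := by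
        have := mul_le_mul_of_nonneg_left hcc hu0.le
        calc φ (w * |u|) = |u| * (|u|⁻¹ * φ (w * |u|)) := by field_simp
          _ ≤ |u| * φ w := by nlinarith
      have h3 := pow_le_pow_left₀ h0 h2 2
      rw [mul_pow, sq_abs] at h3
      have hmax : u ^ 2 ≤ max 1 (u ^ 2) := le_max_right _ _
      nlinarith [sq_nonneg (φ w)]
  -- pointwise key inequality
  have hptwise : ∀ᵐ x : ℝ, ENNReal.ofReal ((g x - Real.sqrt (T x)) ^ 2)
      ≤ ∫⁻ u, ENNReal.ofReal (K u * (g (x - w * u) - g x) ^ 2) := by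
    filter_upwards [hae] with x hx
    have hi2 : Integrable (fun u => K u * s (x - w * u)) := by
      refine ⟨(hmix x).aestronglyMeasurable, ?_⟩
      rw [hasFiniteIntegral_iff_ofReal
        (Filter.Eventually.of_forall fun u => mul_nonneg (hK0 u) (hs0 _))]
      exact hx
    have hKh2eq : (fun u => K u * g (x - w * u) ^ 2) = fun u => K u * s (x - w * u) := by
      funext u; rw [hgsq]
    have hi2' : Integrable (fun u => K u * g (x - w * u) ^ 2) := by rw [hKh2eq]; exact hi2
    have hmgu : Measurable (fun u => g (x - w * u)) :=
      hmg.comp ((measurable_id.const_mul w).const_sub x)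
    have hKh : Integrable (fun u => K u * g (x - w * u)) := by
      refine Integrable.mono' (hKi.add hi2') (hmK.mul hmgu).aestronglyMeasurable
        (Filter.Eventually.of_forall fun u => ?_)
      have h1 : 0 ≤ K u * g (x - w * u) := mul_nonneg (hK0 u) (hgnn _)
      rw [Real.norm_of_nonneg h1]
      simp only [Pi.add_apply]
      nlinarith [mul_nonneg (hK0 u) (sq_nonneg (g (x - w * u) - 1)), hK0 u,
        mul_nonneg (hK0 u) (sq_nonneg (g (x - w * u)))]
    set I : ℝ := ∫ u, K u * g (x - w * u) with hI
    have hInn : 0 ≤ I := integral_nonneg fun u => mul_nonneg (hK0 u) (hgnn _)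
    have hTnn : 0 ≤ T x := integral_nonneg fun u => mul_nonneg (hK0 u) (hs0 _)
    have hTx : T x = ∫ u, K u * g (x - w * u) ^ 2 := by
      simp only [hTdef]; rw [hKh2eq]
    have hbound : ∀ a : ℝ, a * I ≤ (a ^ 2 + T x) / 2 := by
      intro a
      have hmono' : ∫ u, a * (K u * g (x - w * u))
          ≤ ∫ u, (a ^ 2 * K u + K u * g (x - w * u) ^ 2) / 2 := by
        refine integral_mono (hKh.const_mul a) (((hKi.const_mul (a ^ 2)).add hi2').div_const 2)
          fun u => ?_
        nlinarith [mul_nonneg (hK0 u) (sq_nonneg (g (x - w * u) - a))]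
      rw [integral_const_mul] at hmono'
      have heval : ∫ u, (a ^ 2 * K u + K u * g (x - w * u) ^ 2) / 2 = (a ^ 2 + T x) / 2 := by
        rw [integral_div, integral_add (hKi.const_mul (a ^ 2)) hi2', integral_const_mul, hK1,
          mul_one, ← hTx]
      rw [heval] at hmono'
      exact hmono'
    have hIT : I ^ 2 ≤ T x := by have := hbound I; nlinarith
    have hCS : I ≤ Real.sqrt (T x) := by
      calc I = Real.sqrt (I ^ 2) := (Real.sqrt_sq hInn).symm
        _ ≤ Real.sqrt (T x) := Real.sqrt_le_sqrt hIT
    have hexpand : (fun u => K u * (g (x - w * u) - g x) ^ 2)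
        = fun u => (K u * g (x - w * u) ^ 2 - (2 * g x) * (K u * g (x - w * u)))
          + (g x ^ 2) * K u := by
      funext u; ring
    have hKgi : Integrable (fun u => K u * (g (x - w * u) - g x) ^ 2) := by
      rw [hexpand]; exact (hi2'.sub (hKh.const_mul _)).add (hKi.const_mul _)
    have hA : Integrable (fun u => K u * g (x - w * u) ^ 2
        - 2 * g x * (K u * g (x - w * u))) := by
      exact hi2'.sub (hKh.const_mul _)
    have hB : Integrable (fun u => g x ^ 2 * K u) := hKi.const_mul _
    have hexp : ∫ u, K u * (g (x - w * u) - g x) ^ 2 = T x - 2 * g x * I + s x := by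
      rw [hexpand, integral_add hA hB,
        integral_sub hi2' (hKh.const_mul _), integral_const_mul, integral_const_mul, hK1,
        mul_one, ← hTx, ← hI, hgsq]
    have hkey : (g x - Real.sqrt (T x)) ^ 2 ≤ ∫ u, K u * (g (x - w * u) - g x) ^ 2 := by
      rw [hexp]
      have hs2 : Real.sqrt (T x) ^ 2 = T x := Real.sq_sqrt hTnn
      nlinarith [mul_le_mul_of_nonneg_left hCS (hgnn x), hgsq x]
    calc ENNReal.ofReal ((g x - Real.sqrt (T x)) ^ 2)
        ≤ ENNReal.ofReal (∫ u, K u * (g (x - w * u) - g x) ^ 2) :=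
          ENNReal.ofReal_le_ofReal hkey
      _ = ∫⁻ u, ENNReal.ofReal (K u * (g (x - w * u) - g x) ^ 2) :=
          ofReal_integral_eq_lintegral_ofReal hKgi
            (Filter.Eventually.of_forall fun u => mul_nonneg (hK0 u) (sq_nonneg _))
  -- integrability of the majorant
  have hmaxi : Integrable (fun u => max 1 (u ^ 2) * K u) := by
    refine Integrable.mono' (hKi.add hK2)
      ((measurable_const.max (measurable_id.pow_const 2)).mul hmK).aestronglyMeasurable
      (Filter.Eventually.of_forall fun u => ?_)
    have h1 : 0 ≤ max 1 (u ^ 2) * K u :=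
      mul_nonneg (le_trans zero_le_one (le_max_left _ _)) (hK0 u)
    rw [Real.norm_of_nonneg h1]
    simp only [Pi.add_apply]
    have h2 : max 1 (u ^ 2) ≤ 1 + u ^ 2 := max_le (by nlinarith [sq_nonneg u]) (by nlinarith)
    nlinarith [hK0 u]
  have hRHS0 : 0 ≤ ∫ x, max 1 (x ^ 2) * K x :=
    integral_nonneg fun x => mul_nonneg (le_trans zero_le_one (le_max_left _ _)) (hK0 x)
  -- main chain
  have hmain : ∫⁻ x, ENNReal.ofReal ((g x - Real.sqrt (T x)) ^ 2)
      ≤ ENNReal.ofReal ((∫ x, max 1 (x ^ 2) * K x) * φ w ^ 2) := by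
    have hmq : Measurable
        (fun p : ℝ × ℝ => ENNReal.ofReal (K p.2 * (g (p.1 - w * p.2) - g p.1) ^ 2)) :=
      ENNReal.measurable_ofReal.comp ((hmK.comp measurable_snd).mul
        (((hmg.comp (measurable_fst.sub (measurable_snd.const_mul w))).sub
          (hmg.comp measurable_fst)).pow_const 2))
    calc ∫⁻ x, ENNReal.ofReal ((g x - Real.sqrt (T x)) ^ 2)
        ≤ ∫⁻ x, ∫⁻ u, ENNReal.ofReal (K u * (g (x - w * u) - g x) ^ 2) :=
          lintegral_mono_ae hptwise
      _ = ∫⁻ u, ∫⁻ x, ENNReal.ofReal (K u * (g (x - w * u) - g x) ^ 2) :=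
          lintegral_lintegral_swap hmq.aemeasurable
      _ ≤ ∫⁻ u, ENNReal.ofReal (K u * (max 1 (u ^ 2) * φ w ^ 2)) := by
          refine lintegral_mono fun u => ?_
          have hin : ∫⁻ x, ENNReal.ofReal ((g (x - w * u) - g x) ^ 2)
              ≤ ENNReal.ofReal (φ (w * |u|) ^ 2) := by
            have hz : ∀ x : ℝ, x - w * u = x + -(w * u) := fun x => by ring
            have hqi : Integrable (fun x => (g (x + -(w * u)) - g x) ^ 2) := by
              refine Integrable.mono'
                (((hsi.comp_add_right (-(w * u))).const_mul 2).add (hsi.const_mul 2))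
                (((hmg.comp (measurable_add_const _)).sub hmg).pow_const 2).aestronglyMeasurable
                (Filter.Eventually.of_forall fun x => ?_)
              rw [Real.norm_of_nonneg (sq_nonneg _)]
              simp only [Pi.add_apply]
              nlinarith [sq_nonneg (g (x + -(w * u)) + g x), hgsq (x + -(w * u)), hgsq x,
                hs0 (x + -(w * u)), hs0 x]
            simp_rw [hz]
            calc ∫⁻ x, ENNReal.ofReal ((g (x + -(w * u)) - g x) ^ 2)
                = ENNReal.ofReal (∫ x, (g (x + -(w * u)) - g x) ^ 2) :=
                  (ofReal_integral_eq_lintegral_ofReal hqi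
                    (Filter.Eventually.of_forall fun x => sq_nonneg _)).symm
              _ ≤ ENNReal.ofReal (φ (w * |u|) ^ 2) := by
                  refine ENNReal.ofReal_le_ofReal ?_
                  have hm := hmod (-(w * u))
                  rwa [abs_neg, abs_mul, abs_of_pos hw] at hm
          have hmeas2 : Measurable (fun x : ℝ => ENNReal.ofReal ((g (x - w * u) - g x) ^ 2)) :=
            ENNReal.measurable_ofReal.comp
              (((hmg.comp (measurable_id.sub_const (w * u))).sub hmg).pow_const 2)
          calc ∫⁻ x, ENNReal.ofReal (K u * (g (x - w * u) - g x) ^ 2)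
              = ENNReal.ofReal (K u) * ∫⁻ x, ENNReal.ofReal ((g (x - w * u) - g x) ^ 2) := by
                simp_rw [ENNReal.ofReal_mul (hK0 u)]
                exact lintegral_const_mul _ hmeas2
            _ ≤ ENNReal.ofReal (K u) * ENNReal.ofReal (φ (w * |u|) ^ 2) :=
                mul_le_mul_right hin _
            _ ≤ ENNReal.ofReal (K u) * ENNReal.ofReal (max 1 (u ^ 2) * φ w ^ 2) :=
                mul_le_mul_right (ENNReal.ofReal_le_ofReal (hφscale u)) _
            _ = ENNReal.ofReal (K u * (max 1 (u ^ 2) * φ w ^ 2)) :=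
                (ENNReal.ofReal_mul (hK0 u)).symm
      _ = ENNReal.ofReal (∫ u, K u * (max 1 (u ^ 2) * φ w ^ 2)) := by
          refine (ofReal_integral_eq_lintegral_ofReal ?_
            (Filter.Eventually.of_forall fun u => mul_nonneg (hK0 u)
              (mul_nonneg (le_trans zero_le_one (le_max_left _ _)) (sq_nonneg _)))).symm
          have heq2 : (fun u => K u * (max 1 (u ^ 2) * φ w ^ 2))
              = fun u => (max 1 (u ^ 2) * K u) * φ w ^ 2 := by funext u; ring
          rw [heq2]; exact hmaxi.mul_const _
      _ = ENNReal.ofReal ((∫ x, max 1 (x ^ 2) * K x) * φ w ^ 2) := by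
          congr 1
          have heq2 : (fun u => K u * (max 1 (u ^ 2) * φ w ^ 2))
              = fun u => (max 1 (u ^ 2) * K u) * φ w ^ 2 := by funext u; ring
          rw [heq2, integral_mul_const]
  -- finish
  show ∫ x, (g x - Real.sqrt (T x)) ^ 2 ≤ 2 * (∫ x, max 1 (x ^ 2) * K x) * φ w ^ 2
  have hfin : ∫ x, (g x - Real.sqrt (T x)) ^ 2
      = (∫⁻ x, ENNReal.ofReal ((g x - Real.sqrt (T x)) ^ 2)).toReal :=
    integral_eq_lintegral_of_nonneg_ae (Filter.Eventually.of_forall fun x => sq_nonneg _)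
      ((hmg.sub (Real.continuous_sqrt.measurable.comp hmT)).pow_const 2).aestronglyMeasurable
  rw [hfin]
  refine ENNReal.toReal_le_of_le_ofReal
    (mul_nonneg (mul_nonneg (by norm_num) hRHS0) (sq_nonneg _)) ?_
  refine hmain.trans (ENNReal.ofReal_le_ofReal ?_)
  nlinarith [hRHS0, sq_nonneg (φ w)]

theorem stmt10 (s K : ℝ → ℝ)
    (hs0 : ∀ x, 0 ≤ s x) (hs1 : ∫ x, s x = 1)
    (hK0 : ∀ x, 0 ≤ K x) (hK1 : ∫ x, K x = 1)
    (hK2 : Integrable (fun x => x ^ 2 * K x))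
    (φ : ℝ → ℝ) (hmono : MonotoneOn φ (Set.Ici 0))
    (hconc : ConcaveOn ℝ (Set.Ici 0) φ) (hφ0 : φ 0 = 0)
    (hmod : ∀ z : ℝ, (∫ x, (Real.sqrt (s (x + z)) - Real.sqrt (s x)) ^ 2) ≤ (φ |z|) ^ 2)
    (w : ℝ) (hw : 0 < w) :
    (∫ x, (Real.sqrt (s x) - Real.sqrt (∫ y, w⁻¹ * K ((x - y) / w) * s y)) ^ 2)
      ≤ 2 * (∫ x, max 1 (x ^ 2) * K x) * (φ w) ^ 2 := by
  have hwne : w ≠ 0 := hw.ne'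
  have hsi : Integrable s := by
    by_contra h; rw [integral_undef h] at hs1; norm_num at hs1
  have hKi : Integrable K := by
    by_contra h; rw [integral_undef h] at hK1; norm_num at hK1
  -- measurable nonneg representatives
  have hsm := hsi.aestronglyMeasurable
  have hKm := hKi.aestronglyMeasurable
  set s' : ℝ → ℝ := fun x => max (hsm.mk s x) 0 with hs'def
  set K' : ℝ → ℝ := fun x => max (hKm.mk K x) 0 with hK'def
  have hms' : Measurable s' := hsm.stronglyMeasurable_mk.measurable.max measurable_const
  have hmK' : Measurable K' := hKm.stronglyMeasurable_mk.measurable.max measurable_const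
  have hs'ae : s' =ᵐ[volume] s := by
    filter_upwards [hsm.ae_eq_mk] with x hx
    rw [hs'def]; simp only [← hx, max_eq_left (hs0 x)]
  have hK'ae : K' =ᵐ[volume] K := by
    filter_upwards [hKm.ae_eq_mk] with x hx
    rw [hK'def]; simp only [← hx, max_eq_left (hK0 x)]
  have hs'0 : ∀ x, 0 ≤ s' x := fun x => le_max_right _ _
  have hK'0 : ∀ x, 0 ≤ K' x := fun x => le_max_right _ _
  -- transferred hypotheses
  have hs1' : ∫ x, s' x = 1 := by rw [integral_congr_ae hs'ae]; exact hs1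
  have hK1' : ∫ x, K' x = 1 := by rw [integral_congr_ae hK'ae]; exact hK1
  have hK2' : Integrable (fun x => x ^ 2 * K' x) :=
    hK2.congr (by filter_upwards [hK'ae] with x hx; rw [hx])
  have hshift : ∀ z : ℝ, (fun x => s' (x + z)) =ᵐ[volume] fun x => s (x + z) := by
    intro z
    have := ae_comp_affine0 hs'ae 1 z one_ne_zero
    simpa [one_mul] using this
  have hmod' : ∀ z : ℝ, (∫ x, (Real.sqrt (s' (x + z)) - Real.sqrt (s' x)) ^ 2) ≤ (φ |z|) ^ 2 := by
    intro z
    have he : (fun x => (Real.sqrt (s' (x + z)) - Real.sqrt (s' x)) ^ 2)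
        =ᵐ[volume] fun x => (Real.sqrt (s (x + z)) - Real.sqrt (s x)) ^ 2 := by
      filter_upwards [hs'ae, hshift z] with x h1 h2; rw [h1, h2]
    rw [integral_congr_ae he]; exact hmod z
  -- change of variables in the convolution
  have hstep : ∀ x : ℝ, (∫ y, w⁻¹ * K ((x - y) / w) * s y) = ∫ u, K u * s (x - w * u) := by
    intro x
    have e1 : (fun y : ℝ => w⁻¹ * K ((x - y) / w) * s y)
        = fun y => (fun z => w⁻¹ * K (z / w) * s (x - z)) (x - y) := by
      funext y; simp [_root_.sub_sub_cancel]
    rw [e1, integral_comp_sub0 (fun z => w⁻¹ * K (z / w) * s (x - z)) x]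
    have e2 : (fun z : ℝ => w⁻¹ * K (z / w) * s (x - z))
        = fun z => (fun u => w⁻¹ * K u * s (x - w * u)) (z / w) := by
      funext z
      have h3 : w * (z / w) = z := by field_simp
      simp only [h3]
    rw [e2, MeasureTheory.Measure.integral_comp_div (fun u => w⁻¹ * K u * s (x - w * u)) w,
      abs_of_pos hw, smul_eq_mul]
    simp_rw [mul_assoc]
    rw [integral_const_mul, ← mul_assoc, mul_inv_cancel₀ hwne, one_mul]
  have hcongr : ∀ x : ℝ, (∫ u, K u * s (x - w * u)) = ∫ u, K' u * s' (x - w * u) := by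
    intro x
    refine integral_congr_ae ?_
    have h2 : (fun u => s' (x - w * u)) =ᵐ[volume] fun u => s (x - w * u) := by
      have := ae_comp_affine0 hs'ae (-w) x (neg_ne_zero.mpr hwne)
      filter_upwards [this] with y hy
      have he : x - w * y = -w * y + x := by ring
      rw [he]
      exact hy
    filter_upwards [hK'ae, h2] with u hu h2u
    rw [hu, h2u]
  have hgoal_eq : (∫ x, (Real.sqrt (s x) - Real.sqrt (∫ y, w⁻¹ * K ((x - y) / w) * s y)) ^ 2)
      = ∫ x, (Real.sqrt (s' x) - Real.sqrt (∫ u, K' u * s' (x - w * u))) ^ 2 := by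
    refine integral_congr_ae ?_
    filter_upwards [hs'ae] with x hx
    rw [hstep x, hcongr x, hx]
  have hKmax : (∫ x, max 1 (x ^ 2) * K x) = ∫ x, max 1 (x ^ 2) * K' x :=
    integral_congr_ae (by filter_upwards [hK'ae] with x hx; rw [hx])
  rw [hgoal_eq, hKmax]
  exact key0 s' K' hms' hmK' hs'0 hs1' hK'0 hK1' hK2' φ hmono hconc hφ0 hmod' w hw
end

section
/- Let g ∈ L²(ℝ), K a probability density on ℝ, and ξ a random variable with density K. For w > 0 set (K_w∗g)(x) = E[g(x−wξ)]. Then ‖√(K_w ∗ g²)‖² − ‖K_w ∗ g‖² = ∫_ℝ Var(g(x − wξ)) dx ≤ E[ω₂²(g, w|ξ|)], where ω₂(g,η) = sup_{|z|≤η}‖g(·+z)−g‖. -/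
/-!
For fixed `x`, the two inner integrals are the first and second moments of `g (x - w ξ)` for
`ξ` with density `K`, so their difference is a variance; a variance is at most the second moment
about any constant, here `g x`. Integrating in `x` and exchanging the integrals (Fubini) bounds
the left-hand side by `∫ K y ‖g (· - w y) - g‖² dy ≤ ∫ K y ω₂(g, w|y|)² dy`. The same Fubini
argument makes both smoothed integrands integrable, which gives the identity.
-/

open MeasureTheory

section WeightedVariance

variable {α : Type*} [MeasurableSpace α] {μ : Measure α} {K f : α → ℝ}

lemma integrable_mul_of_integrable_mul_sq (hK0 : ∀ y, 0 ≤ K y) (hK : Integrable K μ)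
    (hf : AEStronglyMeasurable f μ) (hKf2 : Integrable (fun y => K y * f y ^ 2) μ) :
    Integrable (fun y => K y * f y) μ := by
  refine ((hK.add hKf2).div_const 2).mono' (hK.aestronglyMeasurable.mul hf)
    (ae_of_all _ fun y => ?_)
  rw [Real.norm_eq_abs, abs_mul, abs_of_nonneg (hK0 y), Pi.add_apply, ← sq_abs (f y)]
  nlinarith [mul_nonneg (hK0 y) (sq_nonneg (|f y| - 1))]

lemma integral_mul_sub_sq (hK0 : ∀ y, 0 ≤ K y) (hK : Integrable K μ) (hK1 : ∫ y, K y ∂μ = 1)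
    (hf : AEStronglyMeasurable f μ) (hKf2 : Integrable (fun y => K y * f y ^ 2) μ) (c : ℝ) :
    ∫ y, K y * (f y - c) ^ 2 ∂μ
      = ∫ y, K y * f y ^ 2 ∂μ - 2 * c * ∫ y, K y * f y ∂μ + c ^ 2 := by
  have hKf := integrable_mul_of_integrable_mul_sq hK0 hK hf hKf2
  have hexpand : (fun y => K y * (f y - c) ^ 2)
      = fun y => K y * f y ^ 2 - 2 * c * (K y * f y) + c ^ 2 * K y := by
    ext y; ring
  have hdiff : Integrable (fun y => K y * f y ^ 2 - 2 * c * (K y * f y)) μ :=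
    hKf2.sub (hKf.const_mul _)
  rw [hexpand, integral_add hdiff (hK.const_mul _), integral_sub hKf2 (hKf.const_mul _),
    integral_const_mul, integral_const_mul, hK1, mul_one]

lemma integral_mul_sq_sub_sq_le (hK0 : ∀ y, 0 ≤ K y) (hK : Integrable K μ)
    (hK1 : ∫ y, K y ∂μ = 1) (hf : AEStronglyMeasurable f μ)
    (hKf2 : Integrable (fun y => K y * f y ^ 2) μ) (c : ℝ) :
    ∫ y, K y * f y ^ 2 ∂μ - (∫ y, K y * f y ∂μ) ^ 2 ≤ ∫ y, K y * (f y - c) ^ 2 ∂μ := by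
  rw [integral_mul_sub_sq hK0 hK hK1 hf hKf2]
  nlinarith [sq_nonneg (∫ y, K y * f y ∂μ - c)]

lemma integral_mul_sq_sub_sq_nonneg (hK0 : ∀ y, 0 ≤ K y) (hK : Integrable K μ)
    (hK1 : ∫ y, K y ∂μ = 1) (hf : AEStronglyMeasurable f μ)
    (hKf2 : Integrable (fun y => K y * f y ^ 2) μ) :
    0 ≤ ∫ y, K y * f y ^ 2 ∂μ - (∫ y, K y * f y ∂μ) ^ 2 := by
  have hmean := integral_mul_sub_sq hK0 hK hK1 hf hKf2 (∫ y, K y * f y ∂μ)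
  have hnonneg : 0 ≤ ∫ y, K y * (f y - ∫ y, K y * f y ∂μ) ^ 2 ∂μ :=
    integral_nonneg fun y => mul_nonneg (hK0 y) (sq_nonneg _)
  nlinarith

end WeightedVariance

lemma integrable_prod_mul_of_integral_le {α β : Type*} [MeasurableSpace α] [MeasurableSpace β]
    {μ : Measure α} {ν : Measure β} [SFinite μ] [SFinite ν] {K : β → ℝ} {φ : α × β → ℝ}
    {C : ℝ} (hK : Integrable K ν) (hφ : AEStronglyMeasurable φ (μ.prod ν))
    (hφ0 : ∀ p, 0 ≤ φ p) (hφi : ∀ y, Integrable (fun x => φ (x, y)) μ)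
    (hφC : ∀ y, ∫ x, φ (x, y) ∂μ ≤ C) :
    Integrable (fun p => K p.2 * φ p) (μ.prod ν) := by
  rw [integrable_prod_iff' (f := fun p => K p.2 * φ p) (hK.aestronglyMeasurable.comp_snd.mul hφ)]
  refine ⟨ae_of_all _ fun y => (hφi y).const_mul (K y), ?_⟩
  have hnorm : (fun y => ∫ x, ‖K y * φ (x, y)‖ ∂μ) = fun y => ‖K y‖ * ∫ x, φ (x, y) ∂μ := by
    ext y
    simp only [norm_mul, Real.norm_of_nonneg (hφ0 _), integral_const_mul]
  rw [hnorm]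
  refine (hK.norm.mul_const C).mono' (hK.norm.aestronglyMeasurable.mul
    hφ.prod_swap.integral_prod_right') (ae_of_all _ fun y => ?_)
  rw [norm_mul, norm_norm, Real.norm_of_nonneg (integral_nonneg fun x => hφ0 _)]
  exact mul_le_mul_of_nonneg_left (hφC y) (norm_nonneg _)

lemma aestronglyMeasurable_comp_sub_mul {E : Type*} [TopologicalSpace E] {g : ℝ → E}
    (hg : AEStronglyMeasurable g) (w : ℝ) :
    AEStronglyMeasurable (fun p : ℝ × ℝ => g (p.1 - w * p.2)) (volume.prod volume) :=
  hg.comp_quasiMeasurePreserving <| QuasiMeasurePreserving.prod_of_left (by fun_prop)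
    (Filter.Eventually.of_forall fun y =>
      (measurePreserving_sub_right volume (w * y)).quasiMeasurePreserving)

section L2Modulus

variable {g : ℝ → ℝ}

/-- `ω₂(g, η)²`; the real supremum is `0` when `η < 0`. -/
noncomputable def l2ModulusSq (g : ℝ → ℝ) (η : ℝ) : ℝ :=
  ⨆ z : {z : ℝ // |z| ≤ η}, ∫ x, (g (x + z.1) - g x) ^ 2

lemma l2ModulusSq_nonneg (g : ℝ → ℝ) (η : ℝ) : 0 ≤ l2ModulusSq g η :=
  Real.iSup_nonneg fun _ => integral_nonneg fun _ => sq_nonneg _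

lemma integrable_sq_sub_comp_add_right (hg : AEStronglyMeasurable g)
    (hg2 : Integrable fun x => g x ^ 2) (z : ℝ) :
    Integrable fun x => (g (x + z) - g x) ^ 2 := by
  refine (((hg2.comp_add_right z).const_mul 2).add (hg2.const_mul 2)).mono'
    (((hg.comp_measurePreserving (measurePreserving_add_right volume z)).sub hg).pow 2)
    (ae_of_all _ fun x => ?_)
  rw [Real.norm_of_nonneg (sq_nonneg _), Pi.add_apply]
  nlinarith [sq_nonneg (g (x + z) + g x)]

lemma integral_sq_sub_comp_add_right_le (hg : AEStronglyMeasurable g)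
    (hg2 : Integrable fun x => g x ^ 2) (z : ℝ) :
    ∫ x, (g (x + z) - g x) ^ 2 ≤ 4 * ∫ x, g x ^ 2 := by
  have hsum : Integrable fun x => 2 * g (x + z) ^ 2 + 2 * g x ^ 2 :=
    ((hg2.comp_add_right z).const_mul 2).add (hg2.const_mul 2)
  calc ∫ x, (g (x + z) - g x) ^ 2 ≤ ∫ x, (2 * g (x + z) ^ 2 + 2 * g x ^ 2) :=
        integral_mono (integrable_sq_sub_comp_add_right hg hg2 z) hsum fun x => by
          nlinarith [sq_nonneg (g (x + z) + g x)]
    _ = 4 * ∫ x, g x ^ 2 := by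
        rw [integral_add ((hg2.comp_add_right z).const_mul 2) (hg2.const_mul 2),
          integral_const_mul, integral_const_mul,
          integral_add_right_eq_self (fun x => g x ^ 2) z]
        ring

lemma integral_sq_sub_comp_add_right_le_l2ModulusSq (hg : AEStronglyMeasurable g)
    (hg2 : Integrable fun x => g x ^ 2) {z η : ℝ} (hz : |z| ≤ η) :
    ∫ x, (g (x + z) - g x) ^ 2 ≤ l2ModulusSq g η := by
  refine le_ciSup (f := fun z : {z : ℝ // |z| ≤ η} => ∫ x, (g (x + z.1) - g x) ^ 2)
    ⟨4 * ∫ x, g x ^ 2, ?_⟩ ⟨z, hz⟩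
  rintro _ ⟨z', rfl⟩
  exact integral_sq_sub_comp_add_right_le hg hg2 z'

lemma l2ModulusSq_le (hg : AEStronglyMeasurable g) (hg2 : Integrable fun x => g x ^ 2)
    (η : ℝ) : l2ModulusSq g η ≤ 4 * ∫ x, g x ^ 2 :=
  Real.iSup_le (fun z => integral_sq_sub_comp_add_right_le hg hg2 z.1)
    (mul_nonneg zero_le_four (integral_nonneg fun _ => sq_nonneg _))

lemma monotone_l2ModulusSq (hg : AEStronglyMeasurable g) (hg2 : Integrable fun x => g x ^ 2) :
    Monotone (l2ModulusSq g) := fun _ b hab =>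
  Real.iSup_le (fun z => integral_sq_sub_comp_add_right_le_l2ModulusSq hg hg2 (z.2.trans hab))
    (l2ModulusSq_nonneg g b)

lemma integrable_mul_l2ModulusSq_comp {α : Type*} [MeasurableSpace α] {μ : Measure α}
    {K h : α → ℝ} (hK0 : ∀ y, 0 ≤ K y) (hK : Integrable K μ) (hh : Measurable h)
    (hg : AEStronglyMeasurable g) (hg2 : Integrable fun x => g x ^ 2) :
    Integrable (fun y => K y * l2ModulusSq g (h y)) μ := by
  refine (hK.mul_const (4 * ∫ x, g x ^ 2)).mono' (hK.aestronglyMeasurable.mul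
    ((monotone_l2ModulusSq hg hg2).measurable.comp hh).aestronglyMeasurable)
    (ae_of_all _ fun y => ?_)
  rw [Real.norm_of_nonneg (mul_nonneg (hK0 y) (l2ModulusSq_nonneg g _))]
  exact mul_le_mul_of_nonneg_left (l2ModulusSq_le hg hg2 _) (hK0 y)

end L2Modulus

theorem stmt11_general (g K : ℝ → ℝ)
    (hg0 : ∀ x, 0 ≤ g x) (hg2 : Integrable (fun x => (g x) ^ 2))
    (hK0 : ∀ x, 0 ≤ K x) (hK1 : ∫ x, K x = 1)
    (w : ℝ) (hw : 0 < w) :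
    let ω2sq : ℝ → ℝ := fun η => ⨆ z : {z : ℝ // |z| ≤ η}, ∫ x, (g (x + z.1) - g x) ^ 2
    ((∫ x, ∫ y, K y * (g (x - w * y)) ^ 2) - (∫ x, (∫ y, K y * g (x - w * y)) ^ 2)
        = ∫ x, ((∫ y, K y * (g (x - w * y)) ^ 2) - (∫ y, K y * g (x - w * y)) ^ 2)) ∧
    (∫ x, ((∫ y, K y * (g (x - w * y)) ^ 2) - (∫ y, K y * g (x - w * y)) ^ 2))
        ≤ ∫ y, K y * ω2sq (w * |y|) := by
  intro ω2sq
  have hg : AEStronglyMeasurable g := by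
    simpa [Real.sqrt_sq (hg0 _)] using
      Real.continuous_sqrt.comp_aestronglyMeasurable hg2.aestronglyMeasurable
  have hK : Integrable K := Integrable.of_integral_ne_zero (by rw [hK1]; exact one_ne_zero)
  have hgw := aestronglyMeasurable_comp_sub_mul hg w
  have hshift (y : ℝ) : (fun x => (g (x - w * y) - g x) ^ 2)
      = fun x => (g (x + -(w * y)) - g x) ^ 2 := by simp only [sub_eq_add_neg]
  have hF : Integrable (fun p : ℝ × ℝ => K p.2 * g (p.1 - w * p.2) ^ 2) (volume.prod volume) :=
    integrable_prod_mul_of_integral_le hK (hgw.pow 2) (fun _ => sq_nonneg _)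
      (fun y => hg2.comp_sub_right (w * y))
      (fun y => (integral_sub_right_eq_self (fun x => g x ^ 2) (w * y)).le)
  have hH : Integrable (fun p : ℝ × ℝ => K p.2 * (g (p.1 - w * p.2) - g p.1) ^ 2)
      (volume.prod volume) :=
    integrable_prod_mul_of_integral_le hK ((hgw.sub hg.comp_fst).pow 2) (fun _ => sq_nonneg _)
      (fun y => hshift y ▸ integrable_sq_sub_comp_add_right hg hg2 _)
      (fun y => hshift y ▸ integral_sq_sub_comp_add_right_le hg hg2 _)
  have hvar : ∀ᵐ x, 0 ≤ (∫ y, K y * g (x - w * y) ^ 2) - (∫ y, K y * g (x - w * y)) ^ 2 ∧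
      (∫ y, K y * g (x - w * y) ^ 2) - (∫ y, K y * g (x - w * y)) ^ 2
        ≤ ∫ y, K y * (g (x - w * y) - g x) ^ 2 := by
    filter_upwards [hF.prod_right_ae, hgw.prodMk_left] with x hFx hgx
    exact ⟨integral_mul_sq_sub_sq_nonneg hK0 hK hK1 hgx hFx,
      integral_mul_sq_sub_sq_le hK0 hK hK1 hgx hFx (g x)⟩
  have hA := hF.integral_prod_left
  have hB : Integrable fun x => (∫ y, K y * g (x - w * y)) ^ 2 :=
    hA.mono' ((hK.aestronglyMeasurable.comp_snd.mul hgw).integral_prod_right'.pow 2)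
      (hvar.mono fun x hx => by rw [Real.norm_of_nonneg (sq_nonneg _)]; linarith [hx.1])
  refine ⟨(integral_sub hA hB).symm, ?_⟩
  calc ∫ x, ((∫ y, K y * g (x - w * y) ^ 2) - (∫ y, K y * g (x - w * y)) ^ 2)
      ≤ ∫ x, ∫ y, K y * (g (x - w * y) - g x) ^ 2 :=
        integral_mono_ae (hA.sub hB) hH.integral_prod_left (hvar.mono fun x hx => hx.2)
    _ = ∫ y, ∫ x, K y * (g (x - w * y) - g x) ^ 2 := integral_integral_swap hH
    _ ≤ ∫ y, K y * l2ModulusSq g (w * |y|) :=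
        integral_mono hH.integral_prod_right
          (integrable_mul_l2ModulusSq_comp hK0 hK (by fun_prop) hg hg2) fun y => by
          rw [integral_const_mul, hshift y]
          refine mul_le_mul_of_nonneg_left
            (integral_sq_sub_comp_add_right_le_l2ModulusSq hg hg2 ?_) (hK0 y)
          rw [abs_neg, abs_mul, abs_of_pos hw]

theorem stmt11 (g K : ℝ → ℝ)
    (hg0 : ∀ x, 0 ≤ g x) (hg2 : Integrable (fun x => (g x) ^ 2))
    (hK0 : ∀ x, 0 ≤ K x) (hK1 : ∫ x, K x = 1)
    (w : ℝ) (hw : 0 < w)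
    (hint1 : Integrable (fun x => ∫ y, K y * (g (x - w * y)) ^ 2))
    (hint2 : Integrable (fun x => (∫ y, K y * g (x - w * y)) ^ 2)) :
    let ω2sq : ℝ → ℝ := fun η => ⨆ z : {z : ℝ // |z| ≤ η}, ∫ x, (g (x + z.1) - g x) ^ 2
    ((∫ x, ∫ y, K y * (g (x - w * y)) ^ 2) - (∫ x, (∫ y, K y * g (x - w * y)) ^ 2)
        = ∫ x, ((∫ y, K y * (g (x - w * y)) ^ 2) - (∫ y, K y * g (x - w * y)) ^ 2)) ∧
    (∫ x, ((∫ y, K y * (g (x - w * y)) ^ 2) - (∫ y, K y * g (x - w * y)) ^ 2))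
        ≤ ∫ y, K y * ω2sq (w * |y|) :=
  stmt11_general g K hg0 hg2 hK0 hK1 w hw
end

section
/- Let K: ℝ → [0,∞) be bounded, non-decreasing on (−∞, M₁) and non-increasing on (M₂, ∞) with M₁ ≤ M₂, and integrable. Then for all L, w > 0: ∫_ℝ sup_{−L ≤ z ≤ L} K((x−z)/w) dx ≤ 2L‖K‖_∞ + w[(M₂−M₁)‖K‖_∞ + ∫_{−∞}^{M₁}K(x)dx + ∫_{M₂}^∞ K(x)dx]. -/
/-! Split the line at `M₁ w - L` and `M₂ w + L`. To the left of the first point every window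
`(x - z) / w`, `|z| ≤ L`, lies in the region where `K` is nondecreasing, so the supremum is attained
at the right end `(x + L) / w`; symmetrically to the right of the second point it is attained at
`(x - L) / w`. On the middle interval, of length `(M₂ - M₁) w + 2L`, bound the supremum by `‖K‖_∞`.
The two outer majorants are rescaled translates of `K` restricted to a half-line, whose integrals
pick up the factor `w`. -/

open MeasureTheory Set

theorem integral_comp_add_div {E : Type*} [NormedAddCommGroup E] [NormedSpace ℝ E]
    (f : ℝ → E) (c a : ℝ) : ∫ x, f ((x + c) / a) = |a| • ∫ x, f x := by
  rw [integral_add_right_eq_self (fun y => f (y / a)) c, Measure.integral_comp_div]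

theorem MeasureTheory.Integrable.comp_add_div {E : Type*} [NormedAddCommGroup E] {f : ℝ → E}
    (hf : Integrable f) (c : ℝ) {a : ℝ} (ha : a ≠ 0) : Integrable fun x => f ((x + c) / a) :=
  (hf.comp_div ha).comp_add_right c

theorem integral_comp_sub_div {E : Type*} [NormedAddCommGroup E] [NormedSpace ℝ E]
    (f : ℝ → E) (c a : ℝ) : ∫ x, f ((x - c) / a) = |a| • ∫ x, f x := by
  rw [integral_sub_right_eq_self (fun y => f (y / a)) c, Measure.integral_comp_div]

theorem MeasureTheory.Integrable.comp_sub_div {E : Type*} [NormedAddCommGroup E] {f : ℝ → E}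
    (hf : Integrable f) (c : ℝ) {a : ℝ} (ha : a ≠ 0) : Integrable fun x => f ((x - c) / a) :=
  (hf.comp_div ha).comp_sub_right c

section Window

variable {K : ℝ → ℝ} {M L w x : ℝ}

theorem iSup_window_le_of_monotoneOn (hK0 : ∀ y, 0 ≤ K y) (hmono : MonotoneOn K (Iio M))
    (hw : 0 < w) (hx : x + L < M * w) :
    ⨆ z : Icc (-L) L, K ((x - z) / w) ≤ K ((x + L) / w) := by
  refine Real.iSup_le (fun ⟨z, hz⟩ => ?_) (hK0 _)
  have hle : (x - z) / w ≤ (x + L) / w := by gcongr; linarith [hz.1]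
  have hlt : (x + L) / w < M := by rwa [div_lt_iff₀ hw]
  exact hmono (hle.trans_lt hlt) hlt hle

theorem iSup_window_le_of_antitoneOn (hK0 : ∀ y, 0 ≤ K y) (hanti : AntitoneOn K (Ioi M))
    (hw : 0 < w) (hx : M * w < x - L) :
    ⨆ z : Icc (-L) L, K ((x - z) / w) ≤ K ((x - L) / w) := by
  refine Real.iSup_le (fun ⟨z, hz⟩ => ?_) (hK0 _)
  have hle : (x - L) / w ≤ (x - z) / w := by gcongr; linarith [hz.2]
  have hgt : M < (x - L) / w := by rwa [lt_div_iff₀ hw]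
  exact hanti hgt (hgt.trans_le hle) hle

end Window

/-- The majorant of `x ↦ ⨆ z ∈ [-L, L], K ((x - z) / w)`, with `C` standing for `‖K‖_∞`. -/
noncomputable def windowMajorant (K : ℝ → ℝ) (M₁ M₂ L w C x : ℝ) : ℝ :=
  (Iio M₁).indicator K ((x + L) / w) + (Icc (M₁ * w - L) (M₂ * w + L)).indicator (fun _ => C) x
    + (Ioi M₂).indicator K ((x - L) / w)

section Majorant

variable {K : ℝ → ℝ} {M₁ M₂ L w C : ℝ}

theorem iSup_window_le_windowMajorant (hK0 : ∀ y, 0 ≤ K y) (hKC : ∀ y, K y ≤ C)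
    (hmono : MonotoneOn K (Iio M₁)) (hanti : AntitoneOn K (Ioi M₂)) (hw : 0 < w) (x : ℝ) :
    ⨆ z : Icc (-L) L, K ((x - z) / w) ≤ windowMajorant K M₁ M₂ L w C x := by
  have hC0 : 0 ≤ C := (hK0 0).trans (hKC 0)
  have h₁ : 0 ≤ (Iio M₁).indicator K ((x + L) / w) := indicator_nonneg (fun y _ => hK0 y) _
  have h₂ : 0 ≤ (Icc (M₁ * w - L) (M₂ * w + L)).indicator (fun _ => C) x :=
    indicator_nonneg (fun _ _ => hC0) _
  have h₃ : 0 ≤ (Ioi M₂).indicator K ((x - L) / w) := indicator_nonneg (fun y _ => hK0 y) _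
  unfold windowMajorant
  by_cases hleft : x + L < M₁ * w
  · have hmem : (x + L) / w ∈ Iio M₁ := by rwa [mem_Iio, div_lt_iff₀ hw]
    rw [indicator_of_mem hmem] at h₁ ⊢
    linarith [iSup_window_le_of_monotoneOn hK0 hmono hw hleft]
  by_cases hright : M₂ * w < x - L
  · have hmem : (x - L) / w ∈ Ioi M₂ := by rwa [mem_Ioi, lt_div_iff₀ hw]
    rw [indicator_of_mem hmem] at h₃ ⊢
    linarith [iSup_window_le_of_antitoneOn hK0 hanti hw hright]
  have hmem : x ∈ Icc (M₁ * w - L) (M₂ * w + L) := ⟨by linarith, by linarith⟩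
  rw [indicator_of_mem hmem] at h₂ ⊢
  linarith [Real.iSup_le (fun z : Icc (-L) L => hKC ((x - z) / w)) hC0]

variable (M₁ M₂ L C)

theorem integrable_windowMajorant (hKint : Integrable K) (hw : 0 < w) :
    Integrable (windowMajorant K M₁ M₂ L w C) := by
  have hleft := (hKint.indicator (measurableSet_Iio (a := M₁))).comp_add_div L hw.ne'
  have hright := (hKint.indicator (measurableSet_Ioi (a := M₂))).comp_sub_div L hw.ne'
  have hmid : Integrable ((Icc (M₁ * w - L) (M₂ * w + L)).indicator fun _ => C) :=
    (integrable_indicator_iff measurableSet_Icc).mpr (integrableOn_const measure_Icc_lt_top.ne)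
  exact (hleft.add hmid).add hright

theorem integral_windowMajorant (hKint : Integrable K) (hM : M₁ ≤ M₂) (hL : 0 ≤ L) (hw : 0 < w) :
    ∫ x, windowMajorant K M₁ M₂ L w C x
      = w * (∫ x in Iic M₁, K x) + (M₂ * w + L - (M₁ * w - L)) * C
        + w * ∫ x in Ici M₂, K x := by
  have hleft := (hKint.indicator (measurableSet_Iio (a := M₁))).comp_add_div L hw.ne'
  have hright := (hKint.indicator (measurableSet_Ioi (a := M₂))).comp_sub_div L hw.ne'
  have hmid : Integrable ((Icc (M₁ * w - L) (M₂ * w + L)).indicator fun _ => C) :=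
    (integrable_indicator_iff measurableSet_Icc).mpr (integrableOn_const measure_Icc_lt_top.ne)
  have hab : M₁ * w - L ≤ M₂ * w + L := by nlinarith
  have hleft_mid : Integrable fun x =>
      (Iio M₁).indicator K ((x + L) / w) + (Icc (M₁ * w - L) (M₂ * w + L)).indicator (fun _ => C) x :=
    hleft.add hmid
  unfold windowMajorant
  rw [integral_add hleft_mid hright, integral_add hleft hmid,
    integral_comp_add_div, integral_comp_sub_div, integral_indicator measurableSet_Iio,
    integral_indicator measurableSet_Ioi, integral_indicator measurableSet_Icc, setIntegral_const,
    Real.volume_real_Icc_of_le hab, setIntegral_congr_set Iio_ae_eq_Iic,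
    setIntegral_congr_set Ioi_ae_eq_Ici, abs_of_pos hw, smul_eq_mul, smul_eq_mul, smul_eq_mul]

end Majorant

theorem stmt16 (K : ℝ → ℝ) (hK0 : ∀ x, 0 ≤ K x) (hKb : BddAbove (Set.range K))
    (M₁ M₂ : ℝ) (hM : M₁ ≤ M₂)
    (hmono : MonotoneOn K (Set.Iio M₁)) (hanti : AntitoneOn K (Set.Ioi M₂))
    (hKint : Integrable K) (L w : ℝ) (hL : 0 < L) (hw : 0 < w) :
    (∫ x, ⨆ z : Set.Icc (-L) L, K ((x - (z : ℝ)) / w))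
      ≤ 2 * L * (⨆ x, K x)
        + w * ((M₂ - M₁) * (⨆ x, K x) + (∫ x in Set.Iic M₁, K x)
          + ∫ x in Set.Ici M₂, K x) := by
  set C := ⨆ x, K x
  have hKC : ∀ y, K y ≤ C := fun y => le_ciSup hKb y
  calc (∫ x, ⨆ z : Icc (-L) L, K ((x - (z : ℝ)) / w))
      ≤ ∫ x, windowMajorant K M₁ M₂ L w C x :=
        integral_mono_of_nonneg (.of_forall fun x => Real.iSup_nonneg fun _ => hK0 _)
          (integrable_windowMajorant M₁ M₂ L C hKint hw)
          (.of_forall (iSup_window_le_windowMajorant hK0 hKC hmono hanti hw))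
    _ = 2 * L * C + w * ((M₂ - M₁) * C + (∫ x in Iic M₁, K x) + ∫ x in Ici M₂, K x) := by
        rw [integral_windowMajorant M₁ M₂ L C hKint hM hL.le hw]
        ring
end
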